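/- Classification theorem, straight-hyperbola case (part 5): Let W = (x_W, y_W) ∈ ℝ² satisfy f₁(W) · f₂(W) < 0 (W lies in the pair of opposite regions R₁ ∪ R₃ cut out by the two perpendicular bisectors, the pair containing A) and dist(W, A) > |y_W| (W is strictly outside the parabola with focus A and directrix BC). Let Q_W(x,y) = h(W)² · f₁(x,y) f₂(x,y) − f₁(W) f₂(W) · h(x,y)², the member of the pencil 𝔽 passing through W. Then the discriminant of Q_W is strictly positive; i.e. the pencil member through W is a hyperbola. -/
import Mathlib

set_option maxHeartbeats 1000000


/-- Affine linear form vanishing exactly on the perpendicular bisector of `AB`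
(`B = (0,0)`, `A = (x_A, y_A)`, `c = |AB|`). -/
noncomputable def f1 (xA yA c x y : ℝ) : ℝ := 2*xA*x + 2*yA*y - c^2

/-- Affine linear form vanishing exactly on the perpendicular bisector of `AC`
(`C = (1,0)`). -/
noncomputable def f2 (xA yA c x y : ℝ) : ℝ := 2*(1 - xA)*x - 2*yA*y + c^2 - 1

/-- Affine linear form vanishing exactly on the line `ZV`. -/
noncomputable def hZV (yA b c x y : ℝ) : ℝ := (b^2 - c^2)*x - 2*yA*y + c^2

/-- Classification theorem, straight-hyperbola case: if `f₁(W) f₂(W) < 0` (so `W` lies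
in `R₁ ∪ R₃`) and `W` is strictly outside the parabola with focus `A` and directrix
`BC`, then the member `Q_W = h(W)² f₁ f₂ − f₁(W) f₂(W) h²` of the pencil `𝔽` through
`W` has strictly positive discriminant, i.e. is a hyperbola. -/
theorem statement9 (xA yA : ℝ) (hyA : yA ≠ 0)
    (b c : ℝ) (hb : b = Real.sqrt ((xA - 1)^2 + yA^2))
    (hc : c = Real.sqrt (xA^2 + yA^2)) (hbc : b ≠ c)
    (xW yW : ℝ)
    (hWreg : f1 xA yA c xW yW * f2 xA yA c xW yW < 0)
    (hWout : Real.sqrt ((xW - xA)^2 + (yW - yA)^2) > |yW|)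
    (Q : ℝ → ℝ → ℝ)
    (hQ : ∀ x y : ℝ, Q x y = (hZV yA b c xW yW)^2 * (f1 xA yA c x y * f2 xA yA c x y)
        - (f1 xA yA c xW yW * f2 xA yA c xW yW) * (hZV yA b c x y)^2)
    (A2 B2 C2 D2 E2 F2 : ℝ)
    (hcoef : ∀ x y : ℝ, Q x y = A2*x^2 + B2*(x*y) + C2*y^2 + D2*x + E2*y + F2) :
    B2^2 - 4*A2*C2 > 0 := by
  set S := hZV yA b c xW yW with hSdef
  set P := f1 xA yA c xW yW * f2 xA yA c xW yW with hPdef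
  have hb2 : b^2 = (xA - 1)^2 + yA^2 := by
    rw [hb]; exact Real.sq_sqrt (by positivity)
  have hc2 : c^2 = xA^2 + yA^2 := by
    rw [hc]; exact Real.sq_sqrt (by positivity)
  have hdist : yW^2 < (xW - xA)^2 + (yW - yA)^2 := by
    have h0 : (0:ℝ) ≤ (xW - xA)^2 + (yW - yA)^2 := by positivity
    have h1 := Real.sq_sqrt h0
    nlinarith [Real.sqrt_nonneg ((xW - xA)^2 + (yW - yA)^2), abs_nonneg yW, sq_abs yW,
      mul_pos (sub_pos.2 hWout) (lt_of_le_of_lt (abs_nonneg yW) hWout)]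
  have hid : S^2 + P = (xW - xA)^2 + (yW - yA)^2 - yW^2 := by
    rw [hSdef, hPdef]
    simp only [hZV, f1, f2]
    linear_combination (xW^2 + 2*c^2*xW - 2*c^2*xW^2 + b^2*xW^2 - 4*yA*xW*yW + yA^2*xW^2
        - 2*xA*xW^2 + xA^2*xW^2) * hb2
      + (1 - 2*xW^2 - 2*c^2*xW + c^2*xW^2 + 4*yA*xW*yW - yA^2*xW^2 + 4*xA*xW^2
        - xA^2*xW^2) * hc2
  have hsum : 0 < S^2 + P := by rw [hid]; linarith
  have hP : P < 0 := hWreg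
  have h00 := hcoef 0 0
  have h10 := hcoef 1 0
  have hm10 := hcoef (-1) 0
  have h01 := hcoef 0 1
  have h0m1 := hcoef 0 (-1)
  have h11 := hcoef 1 1
  have hm1m1 := hcoef (-1) (-1)
  have g00 := hQ 0 0
  have g10 := hQ 1 0
  have gm10 := hQ (-1) 0
  have g01 := hQ 0 1
  have g0m1 := hQ 0 (-1)
  have g11 := hQ 1 1
  have gm1m1 := hQ (-1) (-1)
  simp only [f1, f2, hZV] at g00 g10 gm10 g01 g0m1 g11 gm1m1
  have eA : A2 = 4*xA*(1-xA)*S^2 - P*(b^2-c^2)^2 := by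
    linear_combination (g10 - h10 + gm10 - hm10 - 2*g00 + 2*h00)/2
  have eC : C2 = -4*yA^2*(S^2+P) := by
    linear_combination (g01 - h01 + g0m1 - h0m1 - 2*g00 + 2*h00)/2
  have eB : B2 = 4*yA*(1-2*xA)*S^2 + 4*P*yA*(b^2-c^2) := by
    linear_combination (g11 - h11 + gm1m1 - hm1m1 - (g10 - h10) - (gm10 - hm10)
      - (g01 - h01) - (g0m1 - h0m1) + 2*(g00 - h00))/2
  have key : B2^2 - 4*A2*C2 = 16*yA^2*S^2*(S^2+P) := by
    rw [eA, eB, eC]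
    linear_combination (16*yA^2*S^2*P + 32*yA^2*c^2*S^2*P - 16*yA^2*b^2*S^2*P
        - 16*yA^4*S^2*P - 32*xA*yA^2*S^2*P - 16*xA^2*yA^2*S^2*P) * hb2
      + (-16*yA^2*c^2*S^2*P + 16*yA^4*S^2*P + 16*xA^2*yA^2*S^2*P) * hc2
  rw [key]
  have hy2 : 0 < yA^2 := by
    rcases (sq_nonneg yA).lt_or_eq with h | h
    · exact h
    · exact absurd (pow_eq_zero_iff (n := 2) (by norm_num) |>.1 h.symm) hyA
  have hS2 : 0 < S^2 := by linarith only [hsum, hP]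
  have := mul_pos (mul_pos hy2 hS2) hsum
  linarith only [this]
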